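/- arXiv:1509.07201 — 3 statements merged into one kernel-verified Lean document; each statement's English description precedes it below -/
import Mathlib

section
/- Every discrete event sequence u over U with time horizon h can be written in a unique way as a finite sum of discrete impulses, i.e., there exist unique p₀ ∈ U, a unique n ∈ ℕ, unique p₁, …, pₙ ∈ U \ {0}, and unique positive reals τ₀, …, τₙ₋₁ ∈ ℝ>0 such that u(t) = p₀·δ(t) + Σᵢ₌₁ⁿ pᵢ·δ(t − Σₖ₌₀^{i−1} τₖ) for all t ∈ ℝ≥0, where δ : ℝ → ℝ is the discrete impulse defined by δ(0) = 1 and δ(t) = 0 for t ≠ 0. -/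
noncomputable section

/-- The discrete impulse `δ : ℝ → ℝ`, with `δ 0 = 1` and `δ t = 0` for `t ≠ 0`. -/
def dirac (t : ℝ) : ℝ := if t = 0 then 1 else 0

/-- `u : ℝ → ℝ` is a discrete event sequence over `U` (viewed as a function on `ℝ≥0`):
its values at nonnegative times lie in `U`, and it is nonzero at only finitely many
nonnegative times. -/
def IsDiscreteEventSeq (U : Set ℝ) (u : ℝ → ℝ) : Prop :=
  (∀ t : ℝ, 0 ≤ t → u t ∈ U) ∧ {t : ℝ | 0 ≤ t ∧ u t ≠ 0}.Finite

/-- `(n, p, τ)` is an impulse decomposition of `u` over `U`: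
`u t = p 0 • δ t + ∑ i = 1..n, p i • δ (t - ∑ k < i, τ k)` for all `t ≥ 0`,
where `p 0 ∈ U`, `p 1, …, p n ∈ U \ {0}` and the `τ k` (`k < n`) are positive. -/
def IsImpulseDecomp (U : Set ℝ) (u : ℝ → ℝ) (n : ℕ) (p τ : ℕ → ℝ) : Prop :=
  (∀ i ≤ n, p i ∈ U) ∧ (∀ i, 1 ≤ i → i ≤ n → p i ≠ 0) ∧ (∀ k < n, 0 < τ k) ∧
  ∀ t : ℝ, 0 ≤ t →
    u t = p 0 * dirac t + ∑ i ∈ Finset.Icc 1 n, p i * dirac (t - ∑ k ∈ Finset.range i, τ k)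

namespace ImpulseAux

lemma dirac_zero' : dirac 0 = 1 := if_pos rfl

lemma dirac_ne {t : ℝ} (h : t ≠ 0) : dirac t = 0 := if_neg h

def Tsum (τ : ℕ → ℝ) (i : ℕ) : ℝ := ∑ k ∈ Finset.range i, τ k

lemma Tsum_zero (τ : ℕ → ℝ) : Tsum τ 0 = 0 := by simp [Tsum]

lemma Tsum_succ (τ : ℕ → ℝ) (k : ℕ) : Tsum τ (k + 1) = Tsum τ k + τ k :=
  Finset.sum_range_succ _ _

lemma Tsum_lt {n : ℕ} {τ : ℕ → ℝ} (hτ : ∀ k < n, 0 < τ k) {i j : ℕ}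
    (hij : i < j) (hj : j ≤ n) : Tsum τ i < Tsum τ j := by
  have h1 : Tsum τ i + ∑ k ∈ Finset.Ico i j, τ k = Tsum τ j :=
    Finset.sum_range_add_sum_Ico _ hij.le
  have h2 : 0 < ∑ k ∈ Finset.Ico i j, τ k :=
    Finset.sum_pos (fun k hk => hτ k (lt_of_lt_of_le (Finset.mem_Ico.mp hk).2 hj))
      (by rwa [Finset.nonempty_Ico])
  linarith

lemma Tsum_pos {n : ℕ} {τ : ℕ → ℝ} (hτ : ∀ k < n, 0 < τ k) {i : ℕ}
    (h1 : 1 ≤ i) (hn : i ≤ n) : 0 < Tsum τ i := by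
  have := Tsum_lt hτ (show 0 < i from h1) hn
  simpa [Tsum_zero] using this

def Eval (n : ℕ) (p τ : ℕ → ℝ) (t : ℝ) : ℝ :=
  p 0 * dirac t + ∑ i ∈ Finset.Icc 1 n, p i * dirac (t - Tsum τ i)

lemma Eval_zero {n : ℕ} {p τ : ℕ → ℝ} (hτ : ∀ k < n, 0 < τ k) : Eval n p τ 0 = p 0 := by
  unfold Eval
  rw [dirac_zero']
  have hs : ∑ i ∈ Finset.Icc 1 n, p i * dirac (0 - Tsum τ i) = 0 := by
    apply Finset.sum_eq_zero
    intro i hi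
    obtain ⟨h1, h2⟩ := Finset.mem_Icc.mp hi
    have := Tsum_pos hτ h1 h2
    rw [dirac_ne (by intro hc; rw [sub_eq_zero] at hc; exact absurd hc.symm (ne_of_gt this))]
    ring
  rw [hs]; ring

lemma Eval_T {n : ℕ} {p τ : ℕ → ℝ} (hτ : ∀ k < n, 0 < τ k) {j : ℕ}
    (h1 : 1 ≤ j) (h2 : j ≤ n) : Eval n p τ (Tsum τ j) = p j := by
  unfold Eval
  rw [dirac_ne (ne_of_gt (Tsum_pos hτ h1 h2))]
  rw [Finset.sum_eq_single_of_mem j (Finset.mem_Icc.mpr ⟨h1, h2⟩)]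
  · rw [sub_self, dirac_zero']; ring
  · intro i hi hij
    obtain ⟨hi1, hi2⟩ := Finset.mem_Icc.mp hi
    have hne : Tsum τ j ≠ Tsum τ i := by
      rcases lt_or_gt_of_ne hij with h | h
      · exact (ne_of_lt (Tsum_lt hτ h h2)).symm
      · exact ne_of_lt (Tsum_lt hτ h hi2)
    rw [dirac_ne (sub_ne_zero.mpr hne)]
    ring

lemma Eval_other {n : ℕ} {p τ : ℕ → ℝ} (hτ : ∀ k < n, 0 < τ k) {t : ℝ}
    (ht : t ≠ 0) (h : ∀ i, 1 ≤ i → i ≤ n → t ≠ Tsum τ i) : Eval n p τ t = 0 := by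
  unfold Eval
  rw [dirac_ne ht]
  have hs : ∑ i ∈ Finset.Icc 1 n, p i * dirac (t - Tsum τ i) = 0 := by
    apply Finset.sum_eq_zero
    intro i hi
    obtain ⟨h1, h2⟩ := Finset.mem_Icc.mp hi
    rw [dirac_ne (sub_ne_zero.mpr (h i h1 h2))]
    ring
  rw [hs]; ring

lemma decomp_eq {U : Set ℝ} {u : ℝ → ℝ} {n : ℕ} {p τ : ℕ → ℝ}
    (h : IsImpulseDecomp U u n p τ) {t : ℝ} (ht : 0 ≤ t) : u t = Eval n p τ t :=
  h.2.2.2 t ht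

lemma decomp_support {U : Set ℝ} {u : ℝ → ℝ} {n : ℕ} {p τ : ℕ → ℝ}
    (h : IsImpulseDecomp U u n p τ) (t : ℝ) :
    (0 < t ∧ u t ≠ 0) ↔ ∃ i, 1 ≤ i ∧ i ≤ n ∧ Tsum τ i = t := by
  have hp0 := h.2.1
  have hτ := h.2.2.1
  constructor
  · rintro ⟨ht, hut⟩
    by_contra hc
    push_neg at hc
    apply hut
    rw [decomp_eq h ht.le]
    exact Eval_other hτ (ne_of_gt ht)
      (fun i h1 h2 => fun he => (hc i h1 h2) he.symm)
  · rintro ⟨i, h1, h2, rfl⟩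
    refine ⟨Tsum_pos hτ h1 h2, ?_⟩
    rw [decomp_eq h (Tsum_pos hτ h1 h2).le, Eval_T hτ h1 h2]
    exact hp0 i h1 h2

lemma decomp_finset {U : Set ℝ} {u : ℝ → ℝ} {n : ℕ} {p τ : ℕ → ℝ}
    (h : IsImpulseDecomp U u n p τ) (hS : {t : ℝ | 0 < t ∧ u t ≠ 0}.Finite) :
    hS.toFinset = (Finset.Icc 1 n).image (Tsum τ) := by
  ext t
  rw [Set.Finite.mem_toFinset, Set.mem_setOf_eq, decomp_support h, Finset.mem_image]
  constructor
  · rintro ⟨i, h1, h2, h3⟩; exact ⟨i, Finset.mem_Icc.mpr ⟨h1, h2⟩, h3⟩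
  · rintro ⟨i, hi, h3⟩; obtain ⟨h1, h2⟩ := Finset.mem_Icc.mp hi; exact ⟨i, h1, h2, h3⟩

lemma image_card {n : ℕ} {τ : ℕ → ℝ} (hτ : ∀ k < n, 0 < τ k) :
    ((Finset.Icc 1 n).image (Tsum τ)).card = n := by
  rw [Finset.card_image_of_injOn, Nat.card_Icc]
  · omega
  · intro i hi j hj hij
    simp only [Finset.coe_Icc, Set.mem_Icc] at hi hj
    by_contra hne
    rcases lt_or_gt_of_ne hne with h | h
    · exact absurd hij (ne_of_lt (Tsum_lt hτ h hj.2))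
    · exact absurd hij.symm (ne_of_lt (Tsum_lt hτ h hi.2))

end ImpulseAux

open ImpulseAux

/-- **Unique impulse decomposition.** Every discrete event sequence `u` over a
finite set `U ∋ 0` can be written, in a unique way, as a finite sum of discrete
impulses: there exist `n : ℕ`, events `p 0 ∈ U`, `p 1, …, p n ∈ U \ {0}` and
positive delays `τ 0, …, τ (n-1)` with
`u t = p 0 * δ t + ∑ i = 1..n, p i * δ (t - ∑ k < i, τ k)` for all `t ≥ 0`,
and these data are unique. -/
theorem impulse_decomposition_unique (U : Set ℝ) (hUfin : U.Finite) (hU0 : (0 : ℝ) ∈ U)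
    (u : ℝ → ℝ) (hu : IsDiscreteEventSeq U u) :
    ∃ (n : ℕ) (p τ : ℕ → ℝ), IsImpulseDecomp U u n p τ ∧
      ∀ (n' : ℕ) (p' τ' : ℕ → ℝ), IsImpulseDecomp U u n' p' τ' →
        n' = n ∧ (∀ i ≤ n, p' i = p i) ∧ (∀ k < n, τ' k = τ k) := by
  classical
  obtain ⟨hUmem, hufin⟩ := hu
  have hS : {t : ℝ | 0 < t ∧ u t ≠ 0}.Finite :=
    hufin.subset (fun t ht => ⟨ht.1.le, ht.2⟩)
  set s : Finset ℝ := hS.toFinset with hsdef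
  set n : ℕ := s.card with hndef
  set f : Fin n ↪o ℝ := s.orderEmbOfFin rfl with hfdef
  have hfS : ∀ j : Fin n, 0 < f j ∧ u (f j) ≠ 0 := by
    intro j
    exact (Set.Finite.mem_toFinset hS).mp (s.orderEmbOfFin_mem rfl j)
  set T0 : ℕ → ℝ := fun i => if h : 1 ≤ i ∧ i ≤ n then f ⟨i - 1, by omega⟩ else 0 with hT0def
  have hT00 : T0 0 = 0 := by simp [hT0def]
  have hT0i : ∀ i (h1 : 1 ≤ i) (h2 : i ≤ n), T0 i = f ⟨i - 1, by omega⟩ := by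
    intro i h1 h2
    simp [hT0def, h1, h2]
  set τ : ℕ → ℝ := fun k => T0 (k + 1) - T0 k with hτdef
  have hTsum : ∀ i, Tsum τ i = T0 i := by
    intro i
    have := Finset.sum_range_sub (fun k => T0 k) i
    simp only [Tsum, hτdef]
    rw [this, hT00, sub_zero]
  have hτpos : ∀ k < n, 0 < τ k := by
    intro k hk
    have hk1 : T0 (k + 1) = f ⟨k, hk⟩ := by
      rw [hT0i (k + 1) (by omega) (by omega)]
      congr 1
    rcases Nat.eq_zero_or_pos k with h0 | h0
    · subst h0
      simp only [hτdef, hk1, hT00, sub_zero]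
      exact (hfS _).1
    · have hk0 : T0 k = f ⟨k - 1, by omega⟩ := hT0i k h0 hk.le
      have hlt : (⟨k - 1, by omega⟩ : Fin n) < ⟨k, hk⟩ := by
        simp [Fin.lt_def]; omega
      have := f.strictMono hlt
      simp only [hτdef, hk1, hk0]
      linarith
  set p : ℕ → ℝ := fun i => if i = 0 then u 0 else u (T0 i) with hpdef
  have hmemS : ∀ i (h1 : 1 ≤ i) (h2 : i ≤ n), 0 < T0 i ∧ u (T0 i) ≠ 0 := by
    intro i h1 h2
    rw [hT0i i h1 h2]
    exact hfS _
  have hdecomp : IsImpulseDecomp U u n p τ := by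
    refine ⟨?_, ?_, hτpos, ?_⟩
    · intro i hi
      rcases Nat.eq_zero_or_pos i with h0 | h0
      · simp [hpdef, h0]
        exact hUmem 0 le_rfl
      · have := hmemS i h0 hi
        simp only [hpdef, if_neg (by omega : i ≠ 0)]
        exact hUmem _ this.1.le
    · intro i h1 h2
      simp only [hpdef, if_neg (by omega : i ≠ 0)]
      exact (hmemS i h1 h2).2
    · intro t ht
      have hEv : p 0 * dirac t + ∑ i ∈ Finset.Icc 1 n, p i *
          dirac (t - ∑ k ∈ Finset.range i, τ k) = Eval n p τ t := rfl
      rw [hEv]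
      rcases eq_or_lt_of_le ht with h0 | h0
      · rw [← h0, Eval_zero hτpos]
        simp [hpdef]
      · by_cases hts : u t = 0
        · rw [hts, Eval_other hτpos (ne_of_gt h0)]
          intro i h1 h2 he
          have := (hmemS i h1 h2).2
          rw [← hTsum, ← he] at this
          exact this hts
        · have hts' : t ∈ s := by
            rw [hsdef, Set.Finite.mem_toFinset]
            exact ⟨h0, hts⟩
          have : t ∈ Set.range f := by
            rw [hfdef, Finset.range_orderEmbOfFin]
            exact_mod_cast hts'
          obtain ⟨j, hj⟩ := this
          have hTj : Tsum τ ((j : ℕ) + 1) = t := by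
            rw [hTsum, hT0i _ (by omega) (by omega)]
            simp only [Nat.add_sub_cancel, Fin.eta]
            exact hj
          rw [← hTj, Eval_T hτpos (by omega) (by omega)]
          simp only [hpdef, if_neg (by omega : (j : ℕ) + 1 ≠ 0)]
          rw [← hTsum, hTj]
  refine ⟨n, p, τ, hdecomp, ?_⟩
  intro nn p' τ' h'
  have hτ' := h'.2.2.1
  have hfin : s = (Finset.Icc 1 n).image (Tsum τ) := decomp_finset hdecomp hS
  have hfinn : s = (Finset.Icc 1 nn).image (Tsum τ') := decomp_finset h' hS
  have hcard : nn = n := by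
    rw [hndef, hfinn, image_card hτ']
  subst hcard
  have hsn : s.card = n := hndef.symm
  have hstrict : StrictMono (fun j : Fin n => Tsum τ (j + 1)) := by
    intro a b hab
    exact Tsum_lt hτpos (by exact_mod_cast Nat.add_lt_add_right hab 1) (by omega)
  have hstrict' : StrictMono (fun j : Fin n => Tsum τ' (j + 1)) := by
    intro a b hab
    exact Tsum_lt hτ' (by exact_mod_cast Nat.add_lt_add_right hab 1) (by omega)
  have hmem1 : ∀ j : Fin n, Tsum τ ((j : ℕ) + 1) ∈ s := by
    intro j
    have hjlt := j.isLt
    rw [hfin]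
    exact Finset.mem_image_of_mem _ (Finset.mem_Icc.mpr ⟨Nat.succ_le_succ (Nat.zero_le _), j.isLt⟩)
  have hmem2 : ∀ j : Fin n, Tsum τ' ((j : ℕ) + 1) ∈ s := by
    intro j
    have hjlt := j.isLt
    rw [hfinn]
    exact Finset.mem_image_of_mem _ (Finset.mem_Icc.mpr ⟨Nat.succ_le_succ (Nat.zero_le _), j.isLt⟩)
  have hF : (fun j : Fin n => Tsum τ ((j : ℕ) + 1)) = s.orderEmbOfFin hsn :=
    Finset.orderEmbOfFin_unique hsn hmem1 hstrict
  have hF' : (fun j : Fin n => Tsum τ' ((j : ℕ) + 1)) = s.orderEmbOfFin hsn :=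
    Finset.orderEmbOfFin_unique hsn hmem2 hstrict'
  have hTeq : ∀ i, 1 ≤ i → i ≤ n → Tsum τ' i = Tsum τ i := by
    intro i h1 h2
    have := congrFun (hF'.trans hF.symm) ⟨i - 1, by omega⟩
    simpa [Nat.sub_add_cancel h1] using this
  have hTeq' : ∀ i, i ≤ n → Tsum τ' i = Tsum τ i := by
    intro i h2
    rcases Nat.eq_zero_or_pos i with h0 | h0
    · simp [h0, Tsum_zero]
    · exact hTeq i h0 h2
  refine ⟨rfl, ?_, ?_⟩
  · intro i hi
    rcases Nat.eq_zero_or_pos i with h0 | h0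
    · subst h0
      have e1 : u 0 = p' 0 := by
        rw [decomp_eq h' le_rfl, Eval_zero hτ']
      have e2 : u 0 = p 0 := by
        rw [decomp_eq hdecomp le_rfl, Eval_zero hτpos]
      rw [← e1, e2]
    · have hpos := Tsum_pos hτpos h0 hi
      have e1 : u (Tsum τ i) = p i := by
        rw [decomp_eq hdecomp hpos.le, Eval_T hτpos h0 hi]
      have e2 : u (Tsum τ' i) = p' i := by
        rw [decomp_eq h' (by rw [hTeq i h0 hi]; exact hpos.le), Eval_T hτ' h0 hi]
      rw [← e2, hTeq i h0 hi, e1]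
  · intro k hk
    have e1 : Tsum τ' (k + 1) = Tsum τ (k + 1) := hTeq' (k + 1) (by omega)
    have e2 : Tsum τ' k = Tsum τ k := hTeq' k hk.le
    have s1 := Tsum_succ τ k
    have s2 := Tsum_succ τ' k
    linarith
end
end

section
/- For every simulation campaign Ξ = (x₀, M₀, χ) for a simulator S there exists a simulation campaign Ξ' = (x₀', M₀', χ') in normal form (i.e., χ' consists only of load and run commands) such that the set of explored transitions coincides: T_{Ξ'} = T_Ξ. -/
noncomputable section

/-- A discrete event system (DES) `H = (X, U, Y, φ, ψ)`.  The transition map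
`φ` takes a (nonnegative) time duration, a state, and an input signal
(a function `ℝ → ℝ`, thought of as acting on the time interval `[0, d)`),
and returns a state.  It satisfies:
* consistency: `φ 0 x u = x`;
* semigroup: running for `d₁ + d₂` along `ω` is the same as running for `d₁`
  along `ω` and then for `d₂` along the left-shift of `ω` by `d₁`
  (i.e. along the second half of the concatenation);
* causality: `φ d x ω` only depends on the restriction of `ω` to `[0, d)`. -/
structure DES (X Y : Type*) (U : Set ℝ) where
  φ : ℝ → X → (ℝ → ℝ) → X
  ψ : ℝ → X → Y
  consistency : ∀ (x : X) (u : ℝ → ℝ), φ 0 x u = x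
  semigroup : ∀ (d₁ d₂ : ℝ), 0 < d₁ → 0 < d₂ → ∀ (x : X) (ω : ℝ → ℝ),
      φ (d₁ + d₂) x ω = φ d₂ (φ d₁ x ω) (fun t => ω (t + d₁))
  causal : ∀ (d : ℝ) (x : X) (ω ω' : ℝ → ℝ),
      (∀ t : ℝ, 0 ≤ t → t < d → ω t = ω' t) → φ d x ω = φ d x ω'

/-- Simulator commands. -/
inductive Cmd (X : Type*) where
  | load : X → Cmd X
  | store : Cmd X
  | free : X → Cmd X
  | run : ℝ → ℝ → Cmd X

/-- Well-formed command: the arguments of `run p τ` satisfy `p ∈ U` and `τ > 0`. -/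
def Cmd.WF {X : Type*} (U : Set ℝ) : Cmd X → Prop
  | .run p τ => p ∈ U ∧ 0 < τ
  | _ => True

/-- A command is normal if it is a `load` or a `run`. -/
def Cmd.IsNormal {X : Type*} : Cmd X → Prop
  | .load _ => True
  | .run _ _ => True
  | _ => False

variable {X Y : Type*} {U : Set ℝ}

open Classical in

/-- The transition function `ξ` of the simulator: one (partial) step on a
simulator state `(x, M)`, where `M` is the simulator memory. -/
def simStep (H : DES X Y U) : X × Set X → Cmd X → Option (X × Set X)
  | (_x, M), .load x' => if x' ∈ M then some (x', M) else none
  | (x, M), .free x' => if x' ∈ M then some (x, M \ {x'}) else none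
  | (x, M), .store => some (x, M ∪ {x})
  | (x, M), .run p τ => some (H.φ τ x (fun t => p * dirac t), M)

/-- The sequence of simulator states of the simulation campaign `(x₀, M₀, χ)`:
`stateAt H x₀ M₀ χ j` is the simulator state after executing the first `j`
commands of `χ` (if all of them are defined). -/
def stateAt (H : DES X Y U) (x₀ : X) (M₀ : Set X) (χ : List (Cmd X)) :
    ℕ → Option (X × Set X)
  | 0 => some (x₀, M₀)
  | j + 1 => (stateAt H x₀ M₀ χ j).bind fun s => (χ[j]?).bind (simStep H s)

/-- The set `T_Ξ` of transitions explored by the simulation campaign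
`Ξ = (x₀, M₀, χ)`: all `(x, p, τ, x')` such that at some position `j` the
simulator state is `(x, M)`, the `j`-th command is `run p τ`, and the run
leads to `x' = φ τ x (p·δ)`. -/
def campTrans (H : DES X Y U) (x₀ : X) (M₀ : Set X) (χ : List (Cmd X)) :
    Set (X × ℝ × ℝ × X) :=
  {q | ∃ (j : ℕ) (x : X) (M : Set X) (p τ : ℝ),
    stateAt H x₀ M₀ χ j = some (x, M) ∧ χ[j]? = some (.run p τ) ∧
    q = (x, p, τ, H.φ τ x (fun t => p * dirac t))}


/-!
Only the states from which a transition is run matter, and a `load` can jump to any of them if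
they are all kept in memory. So record the explored runs `(x, p, τ)` in order and replay them as
`load x; run p τ` from a memory holding exactly their source states.
-/

def runTransition (H : DES X Y U) (r : X × ℝ × ℝ) : X × ℝ × ℝ × X :=
  (r.1, r.2.1, r.2.2, H.φ r.2.2 r.1 (fun t => r.2.1 * dirac t))

def loadRunCmds (L : List (X × ℝ × ℝ)) : List (Cmd X) :=
  L.flatMap fun r => [.load r.1, .run r.2.1 r.2.2]

section Campaign

variable (H : DES X Y U)

lemma image_runTransition_cons (r : X × ℝ × ℝ) (L : List (X × ℝ × ℝ)) :
    runTransition H '' {r' | r' ∈ r :: L}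
      = insert (runTransition H r) (runTransition H '' {r' | r' ∈ L}) := by
  rw [← Set.image_insert_eq]
  congr 1
  ext r'
  simp

lemma simStep_run (x : X) (M : Set X) (p τ : ℝ) :
    simStep H (x, M) (.run p τ) = some (H.φ τ x (fun t => p * dirac t), M) := rfl

lemma stateAt_cons_succ (x : X) (M : Set X) (c : Cmd X) (χ : List (Cmd X)) (j : ℕ) :
    stateAt H x M (c :: χ) (j + 1)
      = (simStep H (x, M) c).bind fun s => stateAt H s.1 s.2 χ j := by
  induction j with
  | zero => cases h : simStep H (x, M) c <;> simp [stateAt, h]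
  | succ j ih =>
    rw [stateAt, ih]
    cases simStep H (x, M) c <;> rfl

lemma campTrans_nil (x : X) (M : Set X) : campTrans H x M [] = ∅ := by
  simp [campTrans]

lemma campTrans_cons_run (x : X) (M : Set X) (p τ : ℝ) (χ : List (Cmd X)) :
    campTrans H x M (.run p τ :: χ)
      = insert (runTransition H (x, p, τ))
          (campTrans H (H.φ τ x (fun t => p * dirac t)) M χ) := by
  ext q
  constructor
  · rintro ⟨_ | j, x', M', p', τ', hstate, hcmd, rfl⟩
    · cases hstate
      cases hcmd
      exact Or.inl rfl
    · rw [stateAt_cons_succ] at hstate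
      exact Or.inr ⟨j, x', M', p', τ', hstate, hcmd, rfl⟩
  · rintro (rfl | ⟨j, x', M', p', τ', hstate, hcmd, rfl⟩)
    · exact ⟨0, x, M, p, τ, rfl, rfl, rfl⟩
    · exact ⟨j + 1, x', M', p', τ', by rwa [stateAt_cons_succ], hcmd, rfl⟩

lemma campTrans_cons_of_simStep_eq_some {x : X} {M : Set X} {c : Cmd X} {s : X × Set X}
    (χ : List (Cmd X)) (hc : ∀ p τ, c ≠ .run p τ) (hs : simStep H (x, M) c = some s) :
    campTrans H x M (c :: χ) = campTrans H s.1 s.2 χ := by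
  ext q
  constructor
  · rintro ⟨_ | j, x', M', p, τ, hstate, hcmd, rfl⟩
    · exact absurd (Option.some_inj.mp hcmd) (hc p τ)
    · rw [stateAt_cons_succ, hs] at hstate
      exact ⟨j, x', M', p, τ, hstate, hcmd, rfl⟩
  · rintro ⟨j, x', M', p, τ, hstate, hcmd, rfl⟩
    refine ⟨j + 1, x', M', p, τ, ?_, hcmd, rfl⟩
    rwa [stateAt_cons_succ, hs]

-- A failing command can only be a `load` or `free`, so it is not itself an explored run.
lemma campTrans_cons_of_simStep_eq_none {x : X} {M : Set X} {c : Cmd X} (χ : List (Cmd X))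
    (hs : simStep H (x, M) c = none) : campTrans H x M (c :: χ) = ∅ := by
  refine Set.eq_empty_of_forall_notMem ?_
  rintro q ⟨_ | j, x', M', p, τ, hstate, hcmd, -⟩
  · cases Option.some_inj.mp hcmd
    cases hs
  · rw [stateAt_cons_succ, hs] at hstate
    cases hstate

lemma exists_campTrans_eq_image_runTransition (x : X) (M : Set X) (χ : List (Cmd X))
    (hwf : ∀ c ∈ χ, c.WF U) :
    ∃ L : List (X × ℝ × ℝ), (∀ r ∈ L, r.2.1 ∈ U ∧ 0 < r.2.2) ∧
      campTrans H x M χ = runTransition H '' {r | r ∈ L} := by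
  induction χ generalizing x M with
  | nil => exact ⟨[], by simp, by simp [campTrans_nil]⟩
  | cons c χ ih =>
    have hwfχ : ∀ c ∈ χ, c.WF U := fun c' hc' => hwf c' (List.mem_cons_of_mem c hc')
    by_cases hrun : ∃ p τ, c = .run p τ
    · obtain ⟨p, τ, rfl⟩ := hrun
      obtain ⟨L, hL, hT⟩ := ih (H.φ τ x (fun t => p * dirac t)) M hwfχ
      refine ⟨(x, p, τ) :: L, ?_, ?_⟩
      · simpa using ⟨hwf _ List.mem_cons_self, fun a b c h => hL (a, b, c) h⟩
      · rw [campTrans_cons_run, hT, image_runTransition_cons]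
    · push Not at hrun
      cases hs : simStep H (x, M) c with
      | none => exact ⟨[], by simp, by simp [campTrans_cons_of_simStep_eq_none H χ hs]⟩
      | some s =>
        obtain ⟨L, hL, hT⟩ := ih s.1 s.2 hwfχ
        exact ⟨L, hL, by rw [campTrans_cons_of_simStep_eq_some H χ hrun hs, hT]⟩

lemma loadRunCmds_cons (r : X × ℝ × ℝ) (L : List (X × ℝ × ℝ)) :
    loadRunCmds (r :: L) = .load r.1 :: .run r.2.1 r.2.2 :: loadRunCmds L := rfl

lemma loadRunCmds_wf {L : List (X × ℝ × ℝ)} (hL : ∀ r ∈ L, r.2.1 ∈ U ∧ 0 < r.2.2) :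
    ∀ c ∈ loadRunCmds L, c.WF U := by
  simp only [loadRunCmds, List.mem_flatMap, List.mem_cons, List.not_mem_nil, or_false]
  rintro c ⟨r, hr, rfl | rfl⟩
  exacts [trivial, hL r hr]

lemma loadRunCmds_isNormal (L : List (X × ℝ × ℝ)) :
    ∀ c ∈ loadRunCmds L, c.IsNormal := by
  simp only [loadRunCmds, List.mem_flatMap, List.mem_cons, List.not_mem_nil, or_false]
  rintro c ⟨r, -, rfl | rfl⟩ <;> trivial

lemma loadRunCmds_valid_and_campTrans (M : Set X) (L : List (X × ℝ × ℝ))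
    (hM : ∀ r ∈ L, r.1 ∈ M) (y : X) :
    (stateAt H y M (loadRunCmds L) (loadRunCmds L).length).isSome ∧
      campTrans H y M (loadRunCmds L) = runTransition H '' {r | r ∈ L} := by
  induction L generalizing y with
  | nil => exact ⟨rfl, by simp [loadRunCmds, campTrans_nil]⟩
  | cons r L ih =>
    have hload : simStep H (y, M) (.load r.1) = some (r.1, M) := by
      simp [simStep, hM r List.mem_cons_self]
    obtain ⟨hvalid, hT⟩ := ih (fun r' hr' => hM r' (List.mem_cons_of_mem r hr'))
      (H.φ r.2.2 r.1 (fun t => r.2.1 * dirac t))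
    refine ⟨?_, ?_⟩
    · simpa only [loadRunCmds_cons, List.length_cons, stateAt_cons_succ, hload, simStep_run,
        Option.bind_some] using hvalid
    · rw [loadRunCmds_cons, campTrans_cons_of_simStep_eq_some H _ (by simp) hload,
        campTrans_cons_run, hT, image_runTransition_cons]

end Campaign

theorem exists_normal_form_campaign_general
    (H : DES X Y U)
    (x₀ : X) (M₀ : Set X) (χ : List (Cmd X))
    (hwf : ∀ c ∈ χ, c.WF U) :
    ∃ (x₀' : X) (M₀' : Set X) (χ' : List (Cmd X)),
      M₀'.Finite ∧ (∀ c ∈ χ', c.WF U) ∧ (∀ c ∈ χ', c.IsNormal) ∧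
      (stateAt H x₀' M₀' χ' χ'.length).isSome ∧
      campTrans H x₀' M₀' χ' = campTrans H x₀ M₀ χ := by
  obtain ⟨L, hL, hT⟩ := exists_campTrans_eq_image_runTransition H x₀ M₀ χ hwf
  obtain ⟨hvalid, hT'⟩ :=
    loadRunCmds_valid_and_campTrans H (Prod.fst '' {r | r ∈ L}) L
      (fun r hr => ⟨r, hr, rfl⟩) x₀
  exact ⟨x₀, _, loadRunCmds L, L.finite_toSet.image _, loadRunCmds_wf hL,
    loadRunCmds_isNormal L, hvalid, hT'.trans hT.symm⟩

/-- **Normal form.** For every (valid, finite) simulation campaign `Ξ = (x₀, M₀, χ)`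
for a simulator of `H`, there is a simulation campaign `Ξ' = (x₀', M₀', χ')` in
normal form (`χ'` consists only of `load` and `run` commands) exploring exactly
the same set of transitions: `T_{Ξ'} = T_Ξ`. -/
theorem exists_normal_form_campaign
    [Nonempty X] (H : DES X Y U) (hUfin : U.Finite) (hU0 : (0 : ℝ) ∈ U)
    (x₀ : X) (M₀ : Set X) (hM₀ : M₀.Finite) (χ : List (Cmd X))
    (hwf : ∀ c ∈ χ, c.WF U)
    (hvalid : (stateAt H x₀ M₀ χ χ.length).isSome) :
    ∃ (x₀' : X) (M₀' : Set X) (χ' : List (Cmd X)),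
      M₀'.Finite ∧ (∀ c ∈ χ', c.WF U) ∧ (∀ c ∈ χ', c.IsNormal) ∧
      (stateAt H x₀' M₀' χ' χ'.length).isSome ∧
      campTrans H x₀' M₀' χ' = campTrans H x₀ M₀ χ :=
  exists_normal_form_campaign_general H x₀ M₀ χ hwf
end
end

section
/- (Completeness) For every finite set A = {(x₁, u₁), …, (x_k, u_k)} of simulation scenarios for a DES H, there exists a finite simulation campaign Ξ = (x₀, M₀, χ) for the simulator S such that T_Ξ = ⋃_{i=1}^{k} T_{(xᵢ, uᵢ)}, i.e., the set of transitions explored by the campaign is exactly the union of the sets of transitions of the scenarios in A. -/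
noncomputable section

variable {X Y : Type*} {U : Set ℝ}

/-- The states `x₀ = x`, `x_{i+1} = φ (τ i) x_i (p i · δ)` visited by the trace of a
simulation scenario whose impulse decomposition has events `p` and delays `τ`. -/
def scenState (H : DES X Y U) (x : X) (p τ : ℕ → ℝ) : ℕ → X
  | 0 => x
  | i + 1 => H.φ (τ i) (scenState H x p τ i) (fun t => p i * dirac t)

/-- The set of transitions of the trace determined by the impulse decomposition
data `(n, p, τ)`, started at `x`: the transitions
`(x_i, p i, τ i, x_{i+1})` for `i < n`, where `x_{i+1} = φ (τ i) x_i (p i · δ)`. -/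
def traceTrans (H : DES X Y U) (x : X) (n : ℕ) (p τ : ℕ → ℝ) :
    Set (X × ℝ × ℝ × X) :=
  {q | ∃ i < n, q = (scenState H x p τ i, p i, τ i, scenState H x p τ (i + 1))}

/-- The set `T_(x,u)` of transitions of the simulation scenario `(x, u)`:
the transitions of the trace arising from the (unique) impulse decomposition of `u`. -/
def scenTrans (H : DES X Y U) (x : X) (u : ℝ → ℝ) : Set (X × ℝ × ℝ × X) :=
  {q | ∃ (n : ℕ) (p τ : ℕ → ℝ), IsImpulseDecomp U u n p τ ∧ q ∈ traceTrans H x n p τ}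

/-!
An impulse decomposition `(n, p, τ)` of `u` is determined by `u`: its event times
`0 = T 0 < ⋯ < T n` enumerate `{0} ∪ {t > 0 | u t ≠ 0}` increasingly and `p i = u (T i)`;
conversely, this enumeration yields a decomposition. So `T_(x,u)` is the set of transitions of
the trace of that decomposition, which is what the block `load x, run (p 0) (τ 0), …,
run (p (n-1)) (τ (n-1))` explores when `x` is in memory. With all initial states as the initial
memory, the concatenation of these blocks explores the union of the traces: `load` explores
nothing and the transitions explored by a concatenation are the union of those of its parts.
-/
theorem StrictMonoOn.eq_of_image_Iic_eq {α : Type*} [LinearOrder α] {f g : ℕ → α} {n m : ℕ}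
    (hf : StrictMonoOn f (Set.Iic n)) (hg : StrictMonoOn g (Set.Iic m))
    (h : f '' Set.Iic n = g '' Set.Iic m) : n = m ∧ Set.EqOn f g (Set.Iic n) := by
  have hnm : n = m := by
    have := congrArg Set.ncard h
    rw [hf.injOn.ncard_image, hg.injOn.ncard_image] at this
    simpa [← Set.toFinset_card] using this
  subst hnm
  have hrange : ∀ {f : ℕ → α}, f '' Set.Iic n = Set.range fun i : Fin (n + 1) => f i := by
    intro f
    ext
    simp [Fin.exists_iff]
  have hmono : ∀ {f : ℕ → α}, StrictMonoOn f (Set.Iic n) →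
      StrictMono fun i : Fin (n + 1) => f i := fun hf i j hij =>
    hf (Nat.lt_succ_iff.1 i.2) (Nat.lt_succ_iff.1 j.2) hij
  have hfg := ((hmono hf).range_inj (hmono hg)).1 (by rwa [← hrange, ← hrange])
  exact ⟨rfl, fun i hi => congrFun hfg ⟨i, Nat.lt_succ_of_le hi⟩⟩

theorem Finset.exists_strictMonoOn_image_Iic_eq {α : Type*} [LinearOrder α] (s : Finset α)
    (hs : s.Nonempty) :
    ∃ (n : ℕ) (f : ℕ → α), StrictMonoOn f (Set.Iic n) ∧ f '' Set.Iic n = s := by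
  have hcard := hs.card_pos
  set e := s.orderEmbOfFin rfl
  refine ⟨s.card - 1, fun i => e ⟨min i (s.card - 1), by omega⟩, ?_, ?_⟩
  · intro i hi j hj hij
    simp only [Set.mem_Iic] at hi hj
    exact e.strictMono (Fin.mk_lt_mk.2 (by omega))
  · ext t
    constructor
    · rintro ⟨i, -, rfl⟩
      exact s.orderEmbOfFin_mem rfl _
    · intro ht
      rw [← s.range_orderEmbOfFin rfl] at ht
      obtain ⟨j, rfl⟩ := ht
      exact ⟨j, Set.mem_Iic.2 (by omega), congrArg e (Fin.ext (min_eq_left (by omega)))⟩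

theorem dirac_sub_of_ne {s t : ℝ} (h : s ≠ t) : dirac (s - t) = 0 :=
  if_neg (sub_ne_zero.2 h)

theorem sum_mul_dirac_sub_of_forall_ne {ι : Type*} {s : Finset ι} {T : ι → ℝ} (p : ι → ℝ)
    {t : ℝ} (ht : ∀ i ∈ s, t ≠ T i) : ∑ i ∈ s, p i * dirac (t - T i) = 0 :=
  Finset.sum_eq_zero fun i hi => by rw [dirac_sub_of_ne (ht i hi), mul_zero]

theorem sum_mul_dirac_sub_of_injOn {ι : Type*} {s : Finset ι} {T : ι → ℝ}
    (hT : Set.InjOn T s) (p : ι → ℝ) {j : ι} (hj : j ∈ s) :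
    ∑ i ∈ s, p i * dirac (T j - T i) = p j := by
  rw [Finset.sum_eq_single_of_mem j hj fun i hi hij => by
    rw [dirac_sub_of_ne fun h => hij (hT hi hj h.symm), mul_zero]]
  simp [dirac]

/-- The time at which the impulse `p i` of a decomposition with delays `τ` occurs
(`0` for `i = 0`). -/
def eventTime (τ : ℕ → ℝ) (i : ℕ) : ℝ := ∑ k ∈ Finset.range i, τ k

theorem eventTime_zero (τ : ℕ → ℝ) : eventTime τ 0 = 0 :=
  Finset.sum_range_zero τ

theorem eventTime_succ_sub (τ : ℕ → ℝ) (i : ℕ) : eventTime τ (i + 1) - eventTime τ i = τ i := by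
  simp [eventTime, Finset.sum_range_succ]

theorem strictMonoOn_eventTime {τ : ℕ → ℝ} {n : ℕ} (hτ : ∀ k < n, 0 < τ k) :
    StrictMonoOn (eventTime τ) (Set.Iic n) := by
  intro i _ j hj hij
  simp only [Set.mem_Iic] at hj
  exact Finset.sum_lt_sum_of_subset (Finset.range_subset_range.2 hij.le)
    (Finset.mem_range.2 hij) (by simp) (hτ i (by omega))
    fun k hk _ => (hτ k (by simp at hk; omega)).le

/-- The event times of `u`; `0` is included because the initial impulse `p 0` may vanish. -/
def impulseTimes (u : ℝ → ℝ) : Set ℝ := insert 0 {t | 0 < t ∧ u t ≠ 0}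

section ImpulseDecomp

variable {u : ℝ → ℝ} {n : ℕ} {p τ : ℕ → ℝ}

theorem isImpulseDecomp_iff :
    IsImpulseDecomp U u n p τ ↔
      (∀ i ≤ n, p i ∈ U) ∧ (∀ i, 1 ≤ i → i ≤ n → p i ≠ 0) ∧ (∀ k < n, 0 < τ k) ∧
      ∀ t : ℝ, 0 ≤ t → u t = ∑ i ∈ Finset.Iic n, p i * dirac (t - eventTime τ i) := by
  have hsum : ∀ t, ∑ i ∈ Finset.Iic n, p i * dirac (t - eventTime τ i) =
      p 0 * dirac t + ∑ i ∈ Finset.Icc 1 n, p i * dirac (t - ∑ k ∈ Finset.range i, τ k) := by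
    intro t
    rw [← Nat.range_succ_eq_Iic, Finset.range_eq_Ico,
      Finset.sum_eq_sum_Ico_succ_bot (Nat.succ_pos n), eventTime_zero, sub_zero]
    rfl
  simp only [IsImpulseDecomp, hsum]

namespace IsImpulseDecomp

theorem strictMonoOn_eventTime (hd : IsImpulseDecomp U u n p τ) :
    StrictMonoOn (eventTime τ) (Set.Iic n) :=
  _root_.strictMonoOn_eventTime hd.2.2.1

theorem apply_eq_sum (hd : IsImpulseDecomp U u n p τ) {t : ℝ} (ht : 0 ≤ t) :
    u t = ∑ i ∈ Finset.Iic n, p i * dirac (t - eventTime τ i) :=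
  (isImpulseDecomp_iff.1 hd).2.2.2 t ht

theorem apply_eventTime (hd : IsImpulseDecomp U u n p τ) {j : ℕ} (hj : j ≤ n) :
    u (eventTime τ j) = p j := by
  have hmono := hd.strictMonoOn_eventTime
  have h0 : 0 ≤ eventTime τ j :=
    eventTime_zero τ ▸ hmono.monotoneOn (Set.mem_Iic.2 (Nat.zero_le n)) hj (Nat.zero_le j)
  rw [hd.apply_eq_sum h0]
  exact sum_mul_dirac_sub_of_injOn (by simpa using hmono.injOn) p (Finset.mem_Iic.2 hj)

theorem image_eventTime (hd : IsImpulseDecomp U u n p τ) :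
    eventTime τ '' Set.Iic n = impulseTimes u := by
  ext t
  constructor
  · rintro ⟨i, hi, rfl⟩
    rcases Nat.eq_zero_or_pos i with rfl | hi0
    · exact Or.inl (eventTime_zero τ)
    · refine Or.inr ⟨?_, ?_⟩
      · exact eventTime_zero τ ▸ hd.strictMonoOn_eventTime (Set.mem_Iic.2 (Nat.zero_le n)) hi hi0
      · rw [hd.apply_eventTime hi]
        exact hd.2.1 i hi0 hi
  · rintro (rfl | ⟨ht, hut⟩)
    · exact ⟨0, Set.mem_Iic.2 (Nat.zero_le n), eventTime_zero τ⟩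
    · by_contra hnot
      apply hut
      rw [hd.apply_eq_sum ht.le]
      exact sum_mul_dirac_sub_of_forall_ne p fun i hi h => hnot ⟨i, by simpa using hi, h.symm⟩

theorem unique {m : ℕ} {q σ : ℕ → ℝ} (h₁ : IsImpulseDecomp U u n p τ)
    (h₂ : IsImpulseDecomp U u m q σ) :
    n = m ∧ (∀ i ≤ n, p i = q i) ∧ ∀ i < n, τ i = σ i := by
  obtain ⟨rfl, heq⟩ := h₁.strictMonoOn_eventTime.eq_of_image_Iic_eq h₂.strictMonoOn_eventTime
    (by rw [h₁.image_eventTime, h₂.image_eventTime])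
  refine ⟨rfl, fun i hi => ?_, fun i hi => ?_⟩
  · rw [← h₁.apply_eventTime hi, ← h₂.apply_eventTime hi, heq (Set.mem_Iic.2 hi)]
  · rw [← eventTime_succ_sub τ, ← eventTime_succ_sub σ, heq (Set.mem_Iic.2 hi),
      heq (Set.mem_Iic.2 hi.le)]

end IsImpulseDecomp

theorem IsDiscreteEventSeq.exists_isImpulseDecomp
    (hu : IsDiscreteEventSeq U u) : ∃ (n : ℕ) (p τ : ℕ → ℝ), IsImpulseDecomp U u n p τ := by
  obtain ⟨huU, hfin⟩ := hu
  have hS : (impulseTimes u).Finite := (hfin.subset fun t ht => ⟨ht.1.le, ht.2⟩).insert 0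
  obtain ⟨n, T, hT, himage⟩ :=
    hS.toFinset.exists_strictMonoOn_image_Iic_eq (by simp [impulseTimes])
  rw [hS.coe_toFinset] at himage
  have hTS : ∀ i ≤ n, T i ∈ impulseTimes u := fun i hi => himage ▸ Set.mem_image_of_mem T hi
  have hTnonneg : ∀ i ≤ n, 0 ≤ T i := fun i hi =>
    (hTS i hi).elim (fun h => h.ge) (fun h => h.1.le)
  have hT0 : T 0 = 0 := by
    obtain ⟨j, hj, hTj⟩ : (0 : ℝ) ∈ T '' Set.Iic n := himage ▸ Set.mem_insert 0 _
    have hle := hT.monotoneOn (Set.mem_Iic.2 (Nat.zero_le n)) hj (Nat.zero_le j)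
    linarith [hTnonneg 0 (Nat.zero_le n)]
  have hevent : eventTime (fun k => T (k + 1) - T k) = T := by
    funext i
    rw [eventTime, Finset.sum_range_sub, hT0, sub_zero]
  refine ⟨n, fun i => u (T i), fun k => T (k + 1) - T k, isImpulseDecomp_iff.2
    ⟨fun i hi => huU _ (hTnonneg i hi), fun i hi1 hin => ?_, fun k hk => ?_, fun t ht => ?_⟩⟩
  · have hpos : 0 < T i := hT0 ▸ hT (Set.mem_Iic.2 (Nat.zero_le n)) (Set.mem_Iic.2 hin) hi1
    exact (hTS i hin).resolve_left hpos.ne' |>.2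
  · exact sub_pos.2 (hT (Set.mem_Iic.2 hk.le) (Set.mem_Iic.2 hk) (Nat.lt_succ_self k))
  · rw [hevent]
    by_cases htT : t ∈ T '' Set.Iic n
    · obtain ⟨j, hj, rfl⟩ := htT
      exact (sum_mul_dirac_sub_of_injOn (by simpa using hT.injOn) (fun i => u (T i))
        (Finset.mem_Iic.2 hj)).symm
    · rw [sum_mul_dirac_sub_of_forall_ne _ fun i hi h => htT ⟨i, by simpa using hi, h.symm⟩]
      rw [himage] at htT
      by_contra hut
      exact htT (Or.inr ⟨ht.lt_of_ne fun h => htT (Or.inl h.symm), hut⟩)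

end ImpulseDecomp

section Trace

variable (H : DES X Y U) (x : X)

theorem scenState_congr {n : ℕ} {p τ q σ : ℕ → ℝ} (hp : ∀ i < n, p i = q i)
    (hτ : ∀ i < n, τ i = σ i) : ∀ i ≤ n, scenState H x p τ i = scenState H x q σ i := by
  intro i hi
  induction i with
  | zero => rfl
  | succ i ih => rw [scenState, scenState, ih (by omega), hp i hi, hτ i hi]

theorem traceTrans_congr {n : ℕ} {p τ q σ : ℕ → ℝ} (hp : ∀ i < n, p i = q i)
    (hτ : ∀ i < n, τ i = σ i) : traceTrans H x n p τ = traceTrans H x n q σ := by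
  ext w
  simp only [traceTrans, Set.mem_ofPred_eq]
  refine exists_congr fun i => and_congr_right fun hi => ?_
  rw [scenState_congr H x hp hτ i hi.le, scenState_congr H x hp hτ (i + 1) hi, hp i hi, hτ i hi]

theorem traceTrans_succ (n : ℕ) (p τ : ℕ → ℝ) :
    traceTrans H x (n + 1) p τ = traceTrans H x n p τ ∪
      {(scenState H x p τ n, p n, τ n, scenState H x p τ (n + 1))} := by
  ext w
  simp only [traceTrans, Set.mem_ofPred_eq, Set.mem_union, Set.mem_singleton_iff,
    Nat.lt_succ_iff_lt_or_eq, or_and_right, exists_or, exists_eq_left]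

theorem scenTrans_eq_traceTrans {u : ℝ → ℝ} {n : ℕ} {p τ : ℕ → ℝ}
    (hd : IsImpulseDecomp U u n p τ) : scenTrans H x u = traceTrans H x n p τ := by
  ext w
  constructor
  · rintro ⟨m, q, σ, hd', hw⟩
    obtain ⟨rfl, hp, hτ⟩ := hd'.unique hd
    rwa [traceTrans_congr H x (fun i hi => hp i hi.le) hτ] at hw
  · exact fun hw => ⟨n, p, τ, hd, hw⟩

end Trace

section Campaign

variable (H : DES X Y U) {x₀ x₁ : X} {M₀ M₁ : Set X}

theorem stateAt_append_of_le {χ₁ χ₂ : List (Cmd X)} {j : ℕ} (hj : j ≤ χ₁.length) :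
    stateAt H x₀ M₀ (χ₁ ++ χ₂) j = stateAt H x₀ M₀ χ₁ j := by
  induction j with
  | zero => rfl
  | succ j ih => rw [stateAt, stateAt, ih (by omega), List.getElem?_append_left (by omega)]

theorem stateAt_append_length_add {χ₁ χ₂ : List (Cmd X)}
    (h : stateAt H x₀ M₀ χ₁ χ₁.length = some (x₁, M₁)) (j : ℕ) :
    stateAt H x₀ M₀ (χ₁ ++ χ₂) (χ₁.length + j) = stateAt H x₁ M₁ χ₂ j := by
  induction j with
  | zero => rw [add_zero, stateAt_append_of_le H le_rfl, h, stateAt]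
  | succ j ih =>
    rw [← add_assoc, stateAt, ih, stateAt, List.getElem?_append_right (by omega),
      Nat.add_sub_cancel_left]

theorem stateAt_append_length {χ₁ χ₂ : List (Cmd X)}
    (h : stateAt H x₀ M₀ χ₁ χ₁.length = some (x₁, M₁)) :
    stateAt H x₀ M₀ (χ₁ ++ χ₂) (χ₁ ++ χ₂).length = stateAt H x₁ M₁ χ₂ χ₂.length := by
  rw [List.length_append, stateAt_append_length_add H h]

theorem campTrans_append {χ₁ χ₂ : List (Cmd X)}
    (h : stateAt H x₀ M₀ χ₁ χ₁.length = some (x₁, M₁)) :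
    campTrans H x₀ M₀ (χ₁ ++ χ₂) = campTrans H x₀ M₀ χ₁ ∪ campTrans H x₁ M₁ χ₂ := by
  ext q
  simp only [campTrans, Set.mem_ofPred_eq, Set.mem_union]
  constructor
  · rintro ⟨j, x, M, p, τ, hs, hc, rfl⟩
    rcases lt_or_ge j χ₁.length with hj | hj
    · rw [stateAt_append_of_le H hj.le] at hs
      rw [List.getElem?_append_left hj] at hc
      exact Or.inl ⟨j, x, M, p, τ, hs, hc, rfl⟩
    · obtain ⟨j, rfl⟩ := Nat.exists_eq_add_of_le hj
      rw [stateAt_append_length_add H h] at hs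
      rw [List.getElem?_append_right hj, Nat.add_sub_cancel_left] at hc
      exact Or.inr ⟨j, x, M, p, τ, hs, hc, rfl⟩
  · rintro (⟨j, x, M, p, τ, hs, hc, rfl⟩ | ⟨j, x, M, p, τ, hs, hc, rfl⟩)
    · have hj : j < χ₁.length := (List.getElem?_eq_some_iff.1 hc).1
      refine ⟨j, x, M, p, τ, ?_, ?_, rfl⟩
      · rwa [stateAt_append_of_le H hj.le]
      · rwa [List.getElem?_append_left hj]
    · refine ⟨χ₁.length + j, x, M, p, τ, ?_, ?_, rfl⟩
      · rwa [stateAt_append_length_add H h]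
      · rwa [List.getElem?_append_right (by omega), Nat.add_sub_cancel_left]

theorem stateAt_load (x : X) (hx : x ∈ M₀) :
    stateAt H x₀ M₀ [.load x] 1 = some (x, M₀) := by
  simp [stateAt, simStep, hx]

theorem campTrans_load (x : X) : campTrans H x₀ M₀ [.load x] = ∅ := by
  refine Set.eq_empty_of_forall_notMem ?_
  rintro q ⟨j, x, M, p, τ, -, hc, -⟩
  rcases j with _ | _ <;> simp at hc

theorem stateAt_run (p τ : ℝ) :
    stateAt H x₀ M₀ [.run p τ] 1 = some (H.φ τ x₀ fun t => p * dirac t, M₀) := rfl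

theorem campTrans_run (p τ : ℝ) :
    campTrans H x₀ M₀ [.run p τ] = {(x₀, p, τ, H.φ τ x₀ fun t => p * dirac t)} := by
  ext q
  constructor
  · rintro ⟨j, x, M, p', τ', hs, hc, rfl⟩
    rcases j with _ | _
    · cases hs
      cases hc
      rfl
    · simp at hc
  · rintro rfl
    exact ⟨0, x₀, M₀, p, τ, rfl, rfl, rfl⟩

end Campaign

def runCmds (p τ : ℕ → ℝ) (n : ℕ) : List (Cmd X) :=
  (List.range n).map fun i => .run (p i) (τ i)

def scenCmds (x : X) (p τ : ℕ → ℝ) (n : ℕ) : List (Cmd X) :=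
  .load x :: runCmds p τ n

section Replay

variable (H : DES X Y U) {x₀ x : X} {M : Set X} {p τ : ℕ → ℝ} {n : ℕ}

theorem runCmds_succ : runCmds (X := X) p τ (n + 1) = runCmds p τ n ++ [.run (p n) (τ n)] := by
  simp [runCmds, List.range_succ]

theorem stateAt_runCmds :
    stateAt H x M (runCmds p τ n) (runCmds (X := X) p τ n).length =
      some (scenState H x p τ n, M) := by
  induction n with
  | zero => rfl
  | succ n ih =>
    rw [runCmds_succ, stateAt_append_length H ih]
    exact stateAt_run H (p n) (τ n)

theorem campTrans_runCmds : campTrans H x M (runCmds p τ n) = traceTrans H x n p τ := by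
  induction n with
  | zero =>
    ext q
    simp [campTrans, runCmds, traceTrans]
  | succ n ih =>
    rw [runCmds_succ, campTrans_append H (stateAt_runCmds H), ih, campTrans_run,
      traceTrans_succ]
    rfl

theorem stateAt_scenCmds (hx : x ∈ M) :
    stateAt H x₀ M (scenCmds x p τ n) (scenCmds x p τ n).length =
      some (scenState H x p τ n, M) := by
  rw [scenCmds, ← List.singleton_append, stateAt_append_length H (stateAt_load H x hx),
    stateAt_runCmds]

theorem campTrans_scenCmds (hx : x ∈ M) :
    campTrans H x₀ M (scenCmds x p τ n) = traceTrans H x n p τ := by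
  rw [scenCmds, ← List.singleton_append, campTrans_append H (stateAt_load H x hx),
    campTrans_load, campTrans_runCmds, Set.empty_union]

theorem wf_of_mem_scenCmds (hpτ : ∀ i < n, p i ∈ U ∧ 0 < τ i) :
    ∀ c ∈ scenCmds x p τ n, c.WF U := by
  simp only [scenCmds, runCmds, List.mem_cons, List.mem_map, List.mem_range]
  rintro c (rfl | ⟨i, hi, rfl⟩)
  · trivial
  · exact hpτ i hi

end Replay

theorem campTrans_flatMap (H : DES X Y U) {ι : Type*} (L : List ι) (c : ι → List (Cmd X))
    (T : ι → Set (X × ℝ × ℝ × X)) {M : Set X}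
    (hc : ∀ i ∈ L, ∀ x, (∃ x', stateAt H x M (c i) (c i).length = some (x', M)) ∧
      campTrans H x M (c i) = T i) (x : X) :
    (∃ x', stateAt H x M (L.flatMap c) (L.flatMap c).length = some (x', M)) ∧
      campTrans H x M (L.flatMap c) = ⋃ i ∈ L, T i := by
  induction L generalizing x with
  | nil => exact ⟨⟨x, rfl⟩, by simp [campTrans]⟩
  | cons i L ih =>
    obtain ⟨⟨x', hx'⟩, hTi⟩ := hc i List.mem_cons_self x
    obtain ⟨hfinal, hTL⟩ := ih (fun j hj => hc j (List.mem_cons_of_mem i hj)) x'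
    rw [List.flatMap_cons, stateAt_append_length H hx', campTrans_append H hx', hTi, hTL]
    exact ⟨hfinal, by simp [Set.iUnion_or, Set.iUnion_union_distrib]⟩

theorem completeness_general
    [Nonempty X] (H : DES X Y U)
    (k : ℕ) (xs : Fin k → X) (us : Fin k → ℝ → ℝ)
    (hus : ∀ i, IsDiscreteEventSeq U (us i)) :
    ∃ (x₀ : X) (M₀ : Set X) (χ : List (Cmd X)),
      M₀.Finite ∧ (∀ c ∈ χ, c.WF U) ∧
      (stateAt H x₀ M₀ χ χ.length).isSome ∧
      campTrans H x₀ M₀ χ = ⋃ i, scenTrans H (xs i) (us i) := by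
  choose n p τ hdec using fun i => (hus i).exists_isImpulseDecomp
  obtain ⟨⟨x', hfinal⟩, htrans⟩ := campTrans_flatMap H (List.finRange k)
    (fun i => scenCmds (xs i) (p i) (τ i) (n i)) (fun i => traceTrans H (xs i) (n i) (p i) (τ i))
    (fun i _ _ => ⟨⟨_, stateAt_scenCmds H (Set.mem_range_self i)⟩,
      campTrans_scenCmds H (Set.mem_range_self i)⟩) (Classical.arbitrary X)
  set χ := (List.finRange k).flatMap fun i => scenCmds (xs i) (p i) (τ i) (n i)
  refine ⟨Classical.arbitrary X, Set.range xs, χ, Set.finite_range xs, ?_, by simp [hfinal], ?_⟩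
  · simp only [χ, List.mem_flatMap]
    rintro c ⟨i, -, hc⟩
    refine wf_of_mem_scenCmds (fun j hj => ?_) c hc
    exact ⟨(hdec i).1 j hj.le, (hdec i).2.2.1 j hj⟩
  · simp [htrans, scenTrans_eq_traceTrans H _ (hdec _)]

/-- **Completeness.** For every finite set `A = {(x 1, u 1), …, (x k, u k)}` of
simulation scenarios for `H` there exists a (valid, finite) simulation campaign
`Ξ = (x₀, M₀, χ)` for the simulator of `H` such that the set of transitions
explored by the campaign is exactly the union of the sets of transitions of the
scenarios: `T_Ξ = ⋃ i, T_(x i, u i)`. -/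
theorem completeness
    [Nonempty X] (H : DES X Y U) (hUfin : U.Finite) (hU0 : (0 : ℝ) ∈ U)
    (k : ℕ) (xs : Fin k → X) (us : Fin k → ℝ → ℝ)
    (hus : ∀ i, IsDiscreteEventSeq U (us i)) :
    ∃ (x₀ : X) (M₀ : Set X) (χ : List (Cmd X)),
      M₀.Finite ∧ (∀ c ∈ χ, c.WF U) ∧
      (stateAt H x₀ M₀ χ χ.length).isSome ∧
      campTrans H x₀ M₀ χ = ⋃ i, scenTrans H (xs i) (us i) :=
  completeness_general H k xs us hus
end
end
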